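/- If σ = ∂ξ·∂̄η − ∂̄ξ·∂η = 0 and at a point ∂ξ·∂̄ξ̄ − ∂̄ξ·∂ξ̄ = 0, then at that point ρ = ∂η·∂̄ξ̄ − ∂̄η·∂ξ̄ − (2ξ̄η/(1+ξξ̄))(∂ξ·∂̄ξ̄ − ∂̄ξ·∂ξ̄) satisfies ρ = 0; in particular the imaginary part of ρ vanishes (the point is Lagrangian). -/

import Mathlib

open Complex ComplexConjugate

/-- Wirtinger derivative ∂/∂ν of a function ℂ → ℂ. -/
noncomputable def wd (f : ℂ → ℂ) (ν : ℂ) : ℂ :=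
  (fderiv ℝ f ν 1 - Complex.I * fderiv ℝ f ν Complex.I) / 2

/-- Wirtinger derivative ∂/∂ν̄ of a function ℂ → ℂ. -/
noncomputable def wdbar (f : ℂ → ℂ) (ν : ℂ) : ℂ :=
  (fderiv ℝ f ν 1 + Complex.I * fderiv ℝ f ν Complex.I) / 2

lemma fderiv_conj_apply (f : ℂ → ℂ) (ν v : ℂ) (hf : DifferentiableAt ℝ f ν) :
    fderiv ℝ (fun w => conj (f w)) ν v = conj (fderiv ℝ f ν v) := by
  have : (fun w => conj (f w)) = (Complex.conjCLE : ℂ → ℂ) ∘ f := rfl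
  rw [this, fderiv_comp _ (Complex.conjCLE.differentiableAt) hf]
  rw [ContinuousLinearEquiv.fderiv]; simp

lemma wd_conj (f : ℂ → ℂ) (ν : ℂ) (hf : DifferentiableAt ℝ f ν) :
    wd (fun w => conj (f w)) ν = conj (wdbar f ν) := by
  simp only [wd, wdbar, fderiv_conj_apply f ν _ hf, map_div₀, map_sub, map_add, map_mul,
    Complex.conj_I, map_ofNat]
  ring

lemma wdbar_conj (f : ℂ → ℂ) (ν : ℂ) (hf : DifferentiableAt ℝ f ν) :
    wdbar (fun w => conj (f w)) ν = conj (wd f ν) := by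
  simp only [wd, wdbar, fderiv_conj_apply f ν _ hf, map_div₀, map_sub, map_add, map_mul,
    Complex.conj_I, map_ofNat]
  ring

/-- If σ = ∂ξ·∂̄η − ∂̄ξ·∂η = 0, and at a point ν₀ one has
∂ξ·∂̄ξ̄ − ∂̄ξ·∂ξ̄ = 0, then at that point
ρ = ∂η·∂̄ξ̄ − ∂̄η·∂ξ̄ − (2ξ̄η/(1+ξξ̄))·(∂ξ·∂̄ξ̄ − ∂̄ξ·∂ξ̄) vanishes;
in particular Im ρ = 0, i.e. the point is Lagrangian. -/
theorem stmt1 (ξ η : ℂ → ℂ) (hξ : ContDiff ℝ (⊤ : ℕ∞) ξ) (hη : ContDiff ℝ (⊤ : ℕ∞) η)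
    (ξb : ℂ → ℂ) (hξb : ξb = fun w => conj (ξ w))
    (ν₀ : ℂ) (hden : 1 + ξ ν₀ * conj (ξ ν₀) ≠ 0)
    (hσ : ∀ ν : ℂ, wd ξ ν * wdbar η ν - wdbar ξ ν * wd η ν = 0)
    (hbranch : wd ξ ν₀ * wdbar ξb ν₀ - wdbar ξ ν₀ * wd ξb ν₀ = 0)
    (ρ : ℂ)
    (hρ : ρ = wd η ν₀ * wdbar ξb ν₀ - wdbar η ν₀ * wd ξb ν₀ -
      (2 * conj (ξ ν₀) * η ν₀ / (1 + ξ ν₀ * conj (ξ ν₀))) *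
        (wd ξ ν₀ * wdbar ξb ν₀ - wdbar ξ ν₀ * wd ξb ν₀)) :
    ρ = 0 ∧ ρ.im = 0 := by
  have hdξ : DifferentiableAt ℝ ξ ν₀ := (hξ.differentiable (by simp)) ν₀
  have h1 : wd ξb ν₀ = conj (wdbar ξ ν₀) := by rw [hξb]; exact wd_conj ξ ν₀ hdξ
  have h2 : wdbar ξb ν₀ = conj (wd ξ ν₀) := by rw [hξb]; exact wdbar_conj ξ ν₀ hdξ
  rw [h1, h2] at hbranch hρ
  have hσ0 : wd ξ ν₀ * wdbar η ν₀ - wdbar ξ ν₀ * wd η ν₀ = 0 := hσ ν₀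
  set a := wd ξ ν₀
  set b := wdbar ξ ν₀
  set c := wd η ν₀
  set d := wdbar η ν₀
  clear_value a b c d
  clear hσ hξb
  have key : c * conj a - d * conj b = 0 := by
    by_cases ha : a = 0
    · have hb : b = 0 := by
        have : b * conj b = 0 := by rw [ha] at hbranch; linear_combination -hbranch
        rcases mul_eq_zero.mp this with h | h
        · exact h
        · simpa using congrArg conj h
      simp [ha, hb]
    · have hd : d = b * c / a := by field_simp; linear_combination hσ0
      rw [hd]
      field_simp
      linear_combination c * hbranch
  rw [hρ]
  constructor
  · rw [key, hbranch]; ring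
  · rw [key, hbranch]; simp
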